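/- arXiv:2302.06752 — 6 statements merged into one kernel-verified Lean document; each statement's English description precedes it below -/
import Mathlib

section
/- Let n ≥ 1, and for each i ∈ {1,…,n} let p_i ∈ (0,1) and y_i ∈ {0,1}. Let Δ > 0 and define the biased probabilities p̃_i = Δ·p_i/(Δ·p_i + 1 − p_i). If q̂ > 0 satisfies the stationarity equation ∑_{i=1}^n y_i = ∑_{i=1}^n q̂·p_i/(1 − p_i + q̂·p_i), then q̃ = q̂/Δ satisfies the corresponding stationarity equation for the biased probabilities: ∑_{i=1}^n y_i = ∑_{i=1}^n q̃·p̃_i/(1 − p̃_i + q̃·p̃_i). -/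
/-!
The map `p ↦ q p / (1 - p + q p)` multiplies the odds `p / (1 - p)` by `q`, so two such maps
compose to the one with the product factor. The bias is odds scaling by `Δ`, hence scaling the
biased probabilities by `q̂ / Δ` is scaling the true ones by `q̂`: the two stationarity equations
agree term by term.
-/

open Finset

noncomputable def scaleOdds (q p : ℝ) : ℝ := q * p / (1 - p + q * p)

lemma one_sub_add_mul_pos {q p : ℝ} (hq : 0 ≤ q) (hp₀ : 0 ≤ p) (hp₁ : p < 1) :
    0 < 1 - p + q * p := by
  have := mul_nonneg hq hp₀
  linarith

lemma scaleOdds_scaleOdds {a b p : ℝ} (hb : 1 - p + b * p ≠ 0) :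
    scaleOdds a (scaleOdds b p) = scaleOdds (a * b) p := by
  have hden : 1 - scaleOdds b p + a * scaleOdds b p = (1 - p + a * b * p) / (1 - p + b * p) := by
    unfold scaleOdds
    field_simp
    ring
  rw [scaleOdds, hden]
  unfold scaleOdds
  rw [mul_div_assoc', div_div_div_cancel_right₀ hb, ← mul_assoc]

theorem stmt_1_general (n : ℕ) (p y : Fin n → ℝ)
    (hp : ∀ i, p i ∈ Set.Ioo (0 : ℝ) 1)
    (Δ : ℝ) (hΔ : 0 < Δ)
    (ptilde : Fin n → ℝ)
    (hpt : ∀ i, ptilde i = Δ * p i / (Δ * p i + 1 - p i))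
    (qhat : ℝ)
    (hstat : ∑ i, y i = ∑ i, qhat * p i / (1 - p i + qhat * p i))
    (qtilde : ℝ) (hqt : qtilde = qhat / Δ) :
    ∑ i, y i = ∑ i, qtilde * ptilde i / (1 - ptilde i + qtilde * ptilde i) := by
  rw [hstat]
  refine sum_congr rfl fun i _ => ?_
  have hbias : ptilde i = scaleOdds Δ (p i) := by
    rw [hpt, scaleOdds]
    ring
  have hden := (one_sub_add_mul_pos hΔ.le (hp i).1.le (hp i).2).ne'
  change scaleOdds qhat (p i) = scaleOdds qtilde (ptilde i)
  rw [hbias, scaleOdds_scaleOdds hden, hqt, div_mul_cancel₀ _ hΔ.ne']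

/-- If `q̂ > 0` satisfies the stationarity equation for the true probabilities
`pᵢ`, then `q̃ = q̂/Δ` satisfies the stationarity equation for the biased
probabilities `p̃ᵢ = Δ·pᵢ/(Δ·pᵢ + 1 − pᵢ)`. -/
theorem stmt_1 (n : ℕ) (hn : 1 ≤ n) (p y : Fin n → ℝ)
    (hp : ∀ i, p i ∈ Set.Ioo (0 : ℝ) 1) (hy : ∀ i, y i = 0 ∨ y i = 1)
    (Δ : ℝ) (hΔ : 0 < Δ)
    (ptilde : Fin n → ℝ)
    (hpt : ∀ i, ptilde i = Δ * p i / (Δ * p i + 1 - p i))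
    (qhat : ℝ) (hqhat : 0 < qhat)
    (hstat : ∑ i, y i = ∑ i, qhat * p i / (1 - p i + qhat * p i))
    (qtilde : ℝ) (hqt : qtilde = qhat / Δ) :
    ∑ i, y i = ∑ i, qtilde * ptilde i / (1 - ptilde i + qtilde * ptilde i) :=
  stmt_1_general n p y hp Δ hΔ ptilde hpt qhat hstat qtilde hqt
end

section
/- Let n ≥ 1, and for each i ∈ {1,…,n} let p_i ∈ (0,1) and y_i ∈ {0,1}. Let Δ > 0, q̂ > 0, set q̃ = q̂/Δ and p̃_i = Δ·p_i/(Δ·p_i + 1 − p_i). Then ∑_{i=1}^n y_i·log q̃ − ∑_{i=1}^n log(1 − p̃_i + q̃·p̃_i) = [∑_{i=1}^n y_i·log q̂ − ∑_{i=1}^n log(1 − p_i + q̂·p_i)] − ∑_{i=1}^n y_i·log Δ + ∑_{i=1}^n log(Δ·p_i + 1 − p_i). -/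
open Real Finset

/-- Algebraic core of Theorem 1: the Bias Scan score computed from the
biased probabilities `p̃ᵢ = Δ·pᵢ/(Δ·pᵢ + 1 − pᵢ)` with parameter
`q̃ = q̂/Δ` equals the unbiased score `F_old` minus `∑ yᵢ log Δ`
plus `∑ log(Δ·pᵢ + 1 − pᵢ)`. -/
theorem stmt_2 (n : ℕ) (hn : 1 ≤ n) (p y : Fin n → ℝ)
    (hp : ∀ i, p i ∈ Set.Ioo (0 : ℝ) 1) (hy : ∀ i, y i = 0 ∨ y i = 1)
    (Δ qhat : ℝ) (hΔ : 0 < Δ) (hqhat : 0 < qhat)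
    (qtilde : ℝ) (hqt : qtilde = qhat / Δ)
    (ptilde : Fin n → ℝ)
    (hpt : ∀ i, ptilde i = Δ * p i / (Δ * p i + 1 - p i)) :
    (∑ i, y i * Real.log qtilde)
        - (∑ i, Real.log (1 - ptilde i + qtilde * ptilde i))
      = ((∑ i, y i * Real.log qhat)
            - ∑ i, Real.log (1 - p i + qhat * p i))
        - (∑ i, y i * Real.log Δ)
        + ∑ i, Real.log (Δ * p i + 1 - p i) := by
  have h1 : (∑ i, y i * Real.log qtilde)
      = (∑ i, y i * Real.log qhat) - (∑ i, y i * Real.log Δ) := by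
    rw [← Finset.sum_sub_distrib]
    refine Finset.sum_congr rfl fun i _ => ?_
    rw [hqt, Real.log_div hqhat.ne' hΔ.ne']
    ring
  have h2 : (∑ i, Real.log (1 - ptilde i + qtilde * ptilde i))
      = (∑ i, Real.log (1 - p i + qhat * p i))
        - ∑ i, Real.log (Δ * p i + 1 - p i) := by
    rw [← Finset.sum_sub_distrib]
    refine Finset.sum_congr rfl fun i _ => ?_
    obtain ⟨hp0, hp1⟩ := hp i
    have hD : 0 < Δ * p i + 1 - p i := by nlinarith
    have hN : 0 < 1 - p i + qhat * p i := by nlinarith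
    have key : 1 - ptilde i + qtilde * ptilde i
        = (1 - p i + qhat * p i) / (Δ * p i + 1 - p i) := by
      rw [hpt, hqt]
      field_simp
      ring
    rw [key, Real.log_div hN.ne' hD.ne']
  rw [h1, h2]
  ring
end

section
/- Fix p ∈ (0,1). Then lim_{t → 1⁻} [ (log(t·p + 1 − p)/log t − p) / (1 − t) ] = −p(1−p)/2, where the limit is taken as t tends to 1 from the left within (0,1). -/
open Filter Real Set

lemma Bfun_tendsto :
    Tendsto (fun x : ℝ => (Real.log (1 - x) + x + x ^ 2 / 2) / x ^ 2)
      (nhdsWithin 0 (Set.Ioo 0 1)) (nhds 0) := by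
  rw [tendsto_zero_iff_abs_tendsto_zero]
  apply squeeze_zero' (Eventually.of_forall fun x => abs_nonneg _)
    (g := fun x : ℝ => x / (1 - x))
  · filter_upwards [self_mem_nhdsWithin] with x hx
    obtain ⟨hx0, hx1⟩ := hx
    have hxabs : |x| < 1 := by rw [abs_of_pos hx0]; exact hx1
    have key := abs_log_sub_add_sum_range_le hxabs 2
    simp only [Finset.sum_range_succ, Finset.sum_range_zero] at key
    push_cast at key
    norm_num at key
    have h1x : (0:ℝ) < 1 - x := by linarith
    rw [abs_of_pos hx0] at key
    have hb : |Real.log (1 - x) + x + x ^ 2 / 2| ≤ x ^ 3 / (1 - x) := by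
      have : Real.log (1 - x) + x + x ^ 2 / 2 = x + x ^ 2 / 2 + Real.log (1 - x) := by ring
      rw [this]; exact key
    have hx2 : (0:ℝ) < x ^ 2 := pow_pos hx0 2
    rw [abs_div, abs_of_pos hx2, div_le_iff₀ hx2]
    calc |Real.log (1 - x) + x + x ^ 2 / 2| ≤ x ^ 3 / (1 - x) := hb
      _ = x / (1 - x) * x ^ 2 := by field_simp
  · have h : ContinuousAt (fun x : ℝ => x / (1 - x)) 0 := by
      apply ContinuousAt.div continuousAt_id (by fun_prop) (by norm_num)
    have := h.tendsto.mono_left (nhdsWithin_le_nhds (s := Set.Ioo (0:ℝ) 1))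
    simpa using this

/-- Second-order Taylor expansion (Lemma 1): as `t → 1⁻` within `(0,1)`,
`(log(t·p + 1 − p)/log t − p)/(1 − t) → −p(1−p)/2`. -/
theorem stmt_8 (p : ℝ) (hp : p ∈ Set.Ioo (0 : ℝ) 1) :
    Tendsto (fun t : ℝ =>
        (Real.log (t * p + 1 - p) / Real.log t - p) / (1 - t))
      (nhdsWithin 1 (Set.Ioo 0 1))
      (nhds (-(p * (1 - p)) / 2)) := by
  obtain ⟨hp0, hp1⟩ := hp
  set Bf : ℝ → ℝ := fun x => (Real.log (1 - x) + x + x ^ 2 / 2) / x ^ 2 with hBf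
  -- u = 1 - t tends to 0 within Ioo 0 1
  have hu : Tendsto (fun t : ℝ => 1 - t) (nhdsWithin 1 (Set.Ioo 0 1))
      (nhdsWithin 0 (Set.Ioo 0 1)) := by
    rw [tendsto_nhdsWithin_iff]
    constructor
    · have h0 : Tendsto (fun t : ℝ => 1 - t) (nhds 1) (nhds (1 - 1)) :=
        tendsto_const_nhds.sub tendsto_id
      simpa using h0.mono_left nhdsWithin_le_nhds
    · filter_upwards [self_mem_nhdsWithin] with t ht
      exact ⟨by linarith [ht.2], by linarith [ht.1]⟩
  have hx : Tendsto (fun t : ℝ => (1 - t) * p) (nhdsWithin 1 (Set.Ioo 0 1))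
      (nhdsWithin 0 (Set.Ioo 0 1)) := by
    rw [tendsto_nhdsWithin_iff]
    constructor
    · have h0 : Tendsto (fun t : ℝ => (1 - t) * p) (nhds 1) (nhds ((1 - 1) * p)) :=
        (tendsto_const_nhds.sub tendsto_id).mul_const p
      simpa using h0.mono_left nhdsWithin_le_nhds
    · filter_upwards [self_mem_nhdsWithin] with t ht
      constructor
      · have : 0 < 1 - t := by linarith [ht.2]
        positivity
      · nlinarith [ht.1, ht.2]
  have hA : Tendsto (fun t : ℝ => Bf ((1 - t) * p)) (nhdsWithin 1 (Set.Ioo 0 1)) (nhds 0) :=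
    Bfun_tendsto.comp hx
  have hB : Tendsto (fun t : ℝ => Bf (1 - t)) (nhdsWithin 1 (Set.Ioo 0 1)) (nhds 0) :=
    Bfun_tendsto.comp hu
  have hu0 : Tendsto (fun t : ℝ => (1 - t)) (nhdsWithin 1 (Set.Ioo 0 1)) (nhds 0) :=
    hu.mono_right nhdsWithin_le_nhds
  -- limit of the rewritten expression
  have hF : Tendsto (fun t : ℝ =>
      (p ^ 2 * Bf ((1 - t) * p) - p * Bf (1 - t) + p * (1 - p) / 2) /
        ((1 - t) * Bf (1 - t) - 1 - (1 - t) / 2))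
      (nhdsWithin 1 (Set.Ioo 0 1)) (nhds (-(p * (1 - p)) / 2)) := by
    have hnum : Tendsto (fun t : ℝ =>
        p ^ 2 * Bf ((1 - t) * p) - p * Bf (1 - t) + p * (1 - p) / 2)
        (nhdsWithin 1 (Set.Ioo 0 1)) (nhds (p * (1 - p) / 2)) := by
      have := ((hA.const_mul (p ^ 2)).sub (hB.const_mul p)).add_const (p * (1 - p) / 2)
      simpa using this
    have hden : Tendsto (fun t : ℝ =>
        (1 - t) * Bf (1 - t) - 1 - (1 - t) / 2)
        (nhdsWithin 1 (Set.Ioo 0 1)) (nhds (-1)) := by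
      have := ((hu0.mul hB).sub_const 1).sub (hu0.div_const 2)
      simpa using this
    have heq : -(p * (1 - p)) / 2 = p * (1 - p) / 2 / (-1) := by ring
    rw [heq]
    exact hnum.div hden (by norm_num)
  refine hF.congr' ?_
  filter_upwards [self_mem_nhdsWithin] with t ht
  obtain ⟨ht0, ht1⟩ := ht
  set u : ℝ := 1 - t with hu_def
  have hupos : 0 < u := by simp [hu_def]; linarith
  have hune : u ≠ 0 := ne_of_gt hupos
  have hL1 : Real.log t ≠ 0 := by
    have : Real.log t < 0 := Real.log_neg ht0 ht1
    linarith
  have htsub : 1 - u = t := by simp [hu_def]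
  have hxval : t * p + 1 - p = 1 - u * p := by rw [hu_def]; ring
  have hBfu : Bf u = (Real.log t + u + u ^ 2 / 2) / u ^ 2 := by rw [hBf]; simp [htsub]
  have hBfx : Bf (u * p) = (Real.log (1 - u * p) + u * p + (u * p) ^ 2 / 2) / (u * p) ^ 2 := rfl
  have hpne : p ≠ 0 := ne_of_gt hp0
  -- algebraic identity
  show _ = _
  rw [hxval]
  have hnum_eq : p ^ 2 * Bf ((1 - t) * p) - p * Bf (1 - t) + p * (1 - p) / 2
      = (Real.log (1 - u * p) - p * Real.log t) / u ^ 2 := by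
    have h1 : (1 - t) * p = u * p := by rw [hu_def]
    have h2 : (1 - t) = u := hu_def.symm
    rw [h1, h2, hBfx, hBfu]
    field_simp
    ring
  have hden_eq : (1 - t) * Bf (1 - t) - 1 - (1 - t) / 2 = Real.log t / u := by
    have h2 : (1 - t) = u := hu_def.symm
    rw [h2, hBfu]
    field_simp
    ring
  rw [hnum_eq, hden_eq]
  field_simp
end

section
/- Let φ(x) = e^{−x²/2}/√(2π) denote the standard normal density and Φ(z) = ∫_{−∞}^z φ(x) dx the standard normal cumulative distribution function. Then for every β ∈ ℝ, −2β·φ(−β) − 2β²·(1 − Φ(−β)) ≤ 0.2025. -/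
/-!
Put `t = -β`, so the quantity is `g t = 2tφ(t) - 2t²(1 - Φ(t))` and
`g' t = 2φ(t) - 4t(1 - Φ(t))`. This is positive for `t ≤ 0`, and for `t > 0` it equals `4t·h(t)`
with `h(t) = φ(t)/(2t) - (1 - Φ(t))`. Since `h' = φ(t)(t² - 1)/(2t²)`, `h` decreases on `(0, 1]`
and increases on `[1, ∞)` towards its limit `0`, so it changes sign exactly once, at a zero `t₀`.
Hence `g ≤ g(t₀)`, and `h(t₀) = 0` turns `g(t₀)` into `t₀φ(t₀)`. Numerically
`t₀ ∈ [1/4, 0.6121]`, and `tφ(t)` increases on `[0, 1]`, so `g(t₀) ≤ 0.6121·φ(0.6121) < 0.2025`.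
-/

open Real MeasureTheory Set Filter Topology intervalIntegral

noncomputable section

lemma sqrt_two_pi_pos : 0 < √(2 * π) := by positivity

-- The constant `1/100` is the remainder `y⁵ · 6 / (5! · 5)` of `Real.exp_bound`.
lemma exp_neg_le_taylor {y : ℝ} (h0 : 0 ≤ y) (h1 : y ≤ 1) :
    exp (-y) ≤ 1 - y + y ^ 2 / 2 - y ^ 3 / 6 + y ^ 4 / 24 + y ^ 5 / 100 := by
  have h := Real.exp_bound (x := -y) (by rwa [abs_neg, abs_of_nonneg h0]) (n := 5) (by norm_num)
  rw [abs_neg, abs_of_nonneg h0] at h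
  norm_num [Finset.sum_range_succ, Nat.factorial] at h
  linarith [(abs_le.mp h).2]

lemma integral_exp_neg_sq_half_le {x : ℝ} (h0 : 0 ≤ x) (h1 : x ^ 2 ≤ 2) :
    ∫ s in (0 : ℝ)..x, exp (-s ^ 2 / 2) ≤
      x - x ^ 3 / 6 + x ^ 5 / 40 - x ^ 7 / 336 + x ^ 9 / 3456 + x ^ 11 / 35200 := by
  have hF (s : ℝ) : HasDerivAt
      (fun x : ℝ => x - x ^ 3 / 6 + x ^ 5 / 40 - x ^ 7 / 336 + x ^ 9 / 3456 + x ^ 11 / 35200)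
      (1 - s ^ 2 / 2 + s ^ 4 / 8 - s ^ 6 / 48 + s ^ 8 / 384 + s ^ 10 / 3200) s :=
    ((((((hasDerivAt_id' s).sub ((hasDerivAt_pow 3 s).div_const 6)).add
      ((hasDerivAt_pow 5 s).div_const 40)).sub ((hasDerivAt_pow 7 s).div_const 336)).add
      ((hasDerivAt_pow 9 s).div_const 3456)).add ((hasDerivAt_pow 11 s).div_const 35200)).congr_deriv
      (by norm_num; ring)
  calc ∫ s in (0 : ℝ)..x, exp (-s ^ 2 / 2)
      ≤ ∫ s in (0 : ℝ)..x, (1 - s ^ 2 / 2 + s ^ 4 / 8 - s ^ 6 / 48 + s ^ 8 / 384 + s ^ 10 / 3200) := by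
        refine integral_mono_on h0 (by apply Continuous.intervalIntegrable; fun_prop)
          (by apply Continuous.intervalIntegrable; fun_prop) fun s hs => ?_
        have := exp_neg_le_taylor (y := s ^ 2 / 2) (by positivity) (by nlinarith [hs.1, hs.2])
        rw [neg_div]
        linarith
    _ = x - x ^ 3 / 6 + x ^ 5 / 40 - x ^ 7 / 336 + x ^ 9 / 3456 + x ^ 11 / 35200 := by
        rw [integral_eq_sub_of_hasDerivAt (fun s _ => hF s)
          (by apply Continuous.intervalIntegrable; fun_prop)]
        simp

lemma inv_sqrt_two_pi_le : (√(2 * π))⁻¹ ≤ 0.3989424 := by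
  have h : (2.506628 : ℝ) ≤ √(2 * π) := le_sqrt_of_sq_le (by nlinarith [pi_gt_d6])
  calc (√(2 * π))⁻¹ ≤ (2.506628 : ℝ)⁻¹ := inv_anti₀ (by norm_num) h
    _ ≤ 0.3989424 := by norm_num

namespace StdNormal

def pdf (x : ℝ) : ℝ := exp (-x ^ 2 / 2) / √(2 * π)

def cdf (z : ℝ) : ℝ := ∫ x in Iic z, pdf x

lemma pdf_pos (x : ℝ) : 0 < pdf x := div_pos (exp_pos _) sqrt_two_pi_pos

lemma continuous_pdf : Continuous pdf := by
  unfold pdf; fun_prop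

lemma hasDerivAt_pdf (x : ℝ) : HasDerivAt pdf (-x * pdf x) x := by
  have h : HasDerivAt (fun y : ℝ => -y ^ 2 / 2) (-x) x :=
    ((hasDerivAt_pow 2 x).neg.div_const 2).congr_deriv (by push_cast; ring)
  exact (h.exp.div_const √(2 * π)).congr_deriv (by rw [pdf]; ring)

lemma pdf_eq_gaussian : pdf = fun x => exp (-(1 / 2) * x ^ 2) / √(2 * π) := by
  ext x; rw [pdf]; ring_nf

lemma integrable_pdf : Integrable pdf := by
  rw [pdf_eq_gaussian]
  exact (integrable_exp_neg_mul_sq (by norm_num : (0 : ℝ) < 1 / 2)).div_const √(2 * π)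

lemma integral_pdf : ∫ x, pdf x = 1 := by
  rw [pdf_eq_gaussian, MeasureTheory.integral_div, integral_gaussian]
  rw [show π / (1 / 2) = 2 * π by ring, div_self sqrt_two_pi_pos.ne']

lemma setIntegral_Ioi_zero_pdf : ∫ x in Ioi 0, pdf x = 1 / 2 := by
  rw [pdf_eq_gaussian, MeasureTheory.integral_div, integral_gaussian_Ioi,
    show π / (1 / 2) = 2 * π by ring]
  field_simp

lemma cdf_zero : cdf 0 = 1 / 2 := by
  have h := integral_Iic_add_Ioi (b := 0) integrable_pdf.integrableOn integrable_pdf.integrableOn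
  rw [integral_pdf, setIntegral_Ioi_zero_pdf] at h
  rw [cdf]; linarith

lemma cdf_le_one (z : ℝ) : cdf z ≤ 1 :=
  integral_pdf ▸ setIntegral_le_integral integrable_pdf (.of_forall fun x => (pdf_pos x).le)

lemma cdf_mono : Monotone cdf := fun _ _ hab =>
  setIntegral_mono_set integrable_pdf.integrableOn (.of_forall fun x => (pdf_pos x).le)
    (Iic_subset_Iic.mpr hab).eventuallyLE

lemma cdf_sub_cdf (a b : ℝ) : cdf b - cdf a = ∫ x in a..b, pdf x :=
  integral_Iic_sub_Iic integrable_pdf.integrableOn integrable_pdf.integrableOn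

lemma hasDerivAt_cdf (z : ℝ) : HasDerivAt cdf (pdf z) z := by
  have h := ((continuous_pdf.integral_hasStrictDerivAt 0 z).hasDerivAt).const_add (cdf 0)
  refine h.congr_of_eventuallyEq (.of_forall fun u => ?_)
  simp only [← cdf_sub_cdf]; ring

lemma tendsto_cdf_atTop : Tendsto cdf atTop (𝓝 1) := by
  have h := tendsto_setIntegral_of_monotone (μ := volume) (s := Iic) (f := pdf)
    (fun _ => measurableSet_Iic) (fun _ _ hab => Iic_subset_Iic.mpr hab)
    (by rw [iUnion_Iic]; exact integrable_pdf.integrableOn)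
  rwa [iUnion_Iic, setIntegral_univ, integral_pdf] at h

lemma tendsto_pdf_atTop : Tendsto pdf atTop (𝓝 0) := by
  have h : Tendsto (fun x : ℝ => -x ^ 2 / 2) atTop atBot :=
    (tendsto_neg_atTop_atBot.comp (tendsto_pow_atTop two_ne_zero)).atBot_div_const two_pos
  have := (tendsto_exp_atBot.comp h).div_const √(2 * π)
  rwa [zero_div] at this

lemma monotoneOn_mul_pdf : MonotoneOn (fun t => t * pdf t) (Icc (-1) 1) := by
  have hd (t : ℝ) : HasDerivAt (fun t => t * pdf t) (pdf t * (1 - t ^ 2)) t :=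
    ((hasDerivAt_id' t).mul (hasDerivAt_pdf t)).congr_deriv (by ring)
  refine monotoneOn_of_deriv_nonneg (convex_Icc _ _)
    (fun t _ => (hd t).continuousAt.continuousWithinAt)
    (fun t _ => (hd t).differentiableAt.differentiableWithinAt) fun t ht => ?_
  rw [interior_Icc] at ht
  rw [(hd t).deriv]
  exact mul_nonneg (pdf_pos t).le (by nlinarith [ht.1, ht.2])

def tailGap (t : ℝ) : ℝ := pdf t / (2 * t) - (1 - cdf t)

lemma hasDerivAt_tailGap {t : ℝ} (ht : t ≠ 0) :
    HasDerivAt tailGap (pdf t * (t ^ 2 - 1) / (2 * t ^ 2)) t := by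
  have h := ((hasDerivAt_pdf t).div ((hasDerivAt_id' t).const_mul 2) (by simpa using ht)).sub
    ((hasDerivAt_cdf t).const_sub 1)
  exact h.congr_deriv (by field_simp; ring)

lemma differentiableOn_tailGap : DifferentiableOn ℝ tailGap (Ioi 0) :=
  fun _ ht => (hasDerivAt_tailGap (ne_of_gt ht)).differentiableAt.differentiableWithinAt

lemma antitoneOn_tailGap : AntitoneOn tailGap (Ioc 0 1) := by
  have hd := differentiableOn_tailGap.mono (Ioc_subset_Ioi_self : Ioc (0 : ℝ) 1 ⊆ _)
  refine antitoneOn_of_deriv_nonpos (convex_Ioc 0 1) hd.continuousOn (hd.mono interior_subset)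
    fun t ht => ?_
  rw [interior_Ioc] at ht
  rw [(hasDerivAt_tailGap (ne_of_gt ht.1)).deriv]
  exact div_nonpos_of_nonpos_of_nonneg
    (mul_nonpos_of_nonneg_of_nonpos (pdf_pos t).le (by nlinarith [ht.1, ht.2])) (by positivity)

lemma monotoneOn_tailGap : MonotoneOn tailGap (Ici 1) := by
  have hd := differentiableOn_tailGap.mono (Ici_subset_Ioi.mpr one_pos)
  refine monotoneOn_of_deriv_nonneg (convex_Ici 1) hd.continuousOn (hd.mono interior_subset)
    fun t ht => ?_
  rw [interior_Ici] at ht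
  rw [(hasDerivAt_tailGap (by linarith [mem_Ioi.mp ht])).deriv]
  exact div_nonneg (mul_nonneg (pdf_pos t).le (by nlinarith [mem_Ioi.mp ht])) (by positivity)

lemma tendsto_tailGap_atTop : Tendsto tailGap atTop (𝓝 0) := by
  have h := (tendsto_pdf_atTop.div_atTop (tendsto_id.const_mul_atTop two_pos)).sub
    (tendsto_cdf_atTop.const_sub 1)
  rw [sub_self, sub_zero] at h
  exact h

lemma tailGap_nonpos_of_one_le {t : ℝ} (ht : 1 ≤ t) : tailGap t ≤ 0 :=
  ge_of_tendsto tendsto_tailGap_atTop <| eventually_atTop.mpr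
    ⟨t, fun _ hs => monotoneOn_tailGap ht (ht.trans hs) hs⟩

/-- The paper's expression at `β = -t`. -/
def score (t : ℝ) : ℝ := 2 * t * pdf t - 2 * t ^ 2 * (1 - cdf t)

lemma hasDerivAt_score (t : ℝ) : HasDerivAt score (2 * pdf t - 4 * t * (1 - cdf t)) t := by
  have h := (((hasDerivAt_id' t).const_mul 2).mul (hasDerivAt_pdf t)).sub
    (((hasDerivAt_pow 2 t).const_mul 2).mul ((hasDerivAt_cdf t).const_sub 1))
  exact h.congr_deriv (by push_cast; ring)

lemma differentiable_score : Differentiable ℝ score :=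
  fun t => (hasDerivAt_score t).differentiableAt

lemma score_deriv_eq_mul_tailGap {t : ℝ} (ht : t ≠ 0) :
    2 * pdf t - 4 * t * (1 - cdf t) = 4 * t * tailGap t := by
  rw [tailGap]; field_simp; ring

lemma score_eq_of_tailGap_eq_zero {t : ℝ} (ht : t ≠ 0) (hz : tailGap t = 0) :
    score t = t * pdf t := by
  have : 1 - cdf t = pdf t / (2 * t) := by rw [tailGap] at hz; linarith
  rw [score, this]; field_simp; ring

lemma score_le_of_tailGap_eq_zero {t₀ : ℝ} (ht₀ : 0 < t₀) (ht₀1 : t₀ ≤ 1)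
    (hz : tailGap t₀ = 0) (t : ℝ) : score t ≤ score t₀ := by
  have hmono : MonotoneOn score (Iic t₀) := by
    refine monotoneOn_of_deriv_nonneg (convex_Iic t₀)
      differentiable_score.continuous.continuousOn differentiable_score.differentiableOn fun x hx => ?_
    rw [interior_Iic] at hx
    rw [(hasDerivAt_score x).deriv]
    rcases le_or_gt x 0 with hx0 | hx0
    · nlinarith [pdf_pos x, cdf_le_one x]
    · rw [score_deriv_eq_mul_tailGap hx0.ne']
      have : tailGap t₀ ≤ tailGap x :=
        antitoneOn_tailGap ⟨hx0, (mem_Iio.mp hx).le.trans ht₀1⟩ ⟨ht₀, ht₀1⟩ (mem_Iio.mp hx).le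
      have := mul_nonneg (by positivity : (0 : ℝ) ≤ 4 * x) (hz ▸ this)
      linarith
  have hanti : AntitoneOn score (Ici t₀) := by
    refine antitoneOn_of_deriv_nonpos (convex_Ici t₀)
      differentiable_score.continuous.continuousOn differentiable_score.differentiableOn fun x hx => ?_
    rw [interior_Ici] at hx
    have hx0 : 0 < x := ht₀.trans hx
    rw [(hasDerivAt_score x).deriv, score_deriv_eq_mul_tailGap hx0.ne']
    have : tailGap x ≤ 0 := by
      rcases le_or_gt x 1 with hx1 | hx1
      · exact hz ▸ antitoneOn_tailGap ⟨ht₀, ht₀1⟩ ⟨hx0, hx1⟩ (mem_Ioi.mp hx).le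
      · exact tailGap_nonpos_of_one_le hx1.le
    exact mul_nonpos_of_nonneg_of_nonpos (by positivity) this
  rcases le_total t t₀ with h | h
  · exact hmono h self_mem_Iic h
  · exact hanti self_mem_Ici h h

lemma cdf_eq_half_add (x : ℝ) :
    cdf x = 1 / 2 + (∫ s in (0 : ℝ)..x, exp (-s ^ 2 / 2)) / √(2 * π) := by
  have h := cdf_sub_cdf 0 x
  simp only [cdf_zero, pdf, intervalIntegral.integral_div] at h
  linarith

lemma quarter_lt_pdf_quarter : 1 / 4 < pdf (1 / 4) := by
  have hs : √(2 * π) < 2.51 := (sqrt_lt' (by norm_num)).mpr (by nlinarith [pi_lt_d2])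
  have he := add_one_le_exp (-(1 / 4 : ℝ) ^ 2 / 2)
  rw [pdf, lt_div_iff₀ sqrt_two_pi_pos]
  nlinarith

lemma pdf_0_6121_le : pdf 0.6121 ≤ 0.3308 := by
  have he := exp_neg_le_taylor (y := 0.6121 ^ 2 / 2) (by norm_num) (by norm_num)
  have := mul_le_mul he inv_sqrt_two_pi_le (inv_nonneg.mpr sqrt_two_pi_pos.le) (by norm_num)
  rw [pdf, div_eq_mul_inv, neg_div]
  norm_num at this ⊢
  linarith

lemma cdf_0_6121_le : cdf 0.6121 ≤ 0.72977 := by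
  have hJ := integral_exp_neg_sq_half_le (x := 0.6121) (by norm_num) (by norm_num)
  have := mul_le_mul hJ inv_sqrt_two_pi_le (inv_nonneg.mpr sqrt_two_pi_pos.le) (by norm_num)
  have hc : (0.6121 - 0.6121 ^ 3 / 6 + 0.6121 ^ 5 / 40 - 0.6121 ^ 7 / 336 + 0.6121 ^ 9 / 3456
      + 0.6121 ^ 11 / 35200 : ℝ) * 0.3989424 ≤ 0.22977 := by norm_num
  rw [← div_eq_mul_inv] at this
  rw [cdf_eq_half_add]
  linarith

lemma tailGap_quarter_pos : 0 < tailGap (1 / 4) := by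
  have hcdf := cdf_mono (by norm_num : (0 : ℝ) ≤ 1 / 4)
  have hpdf := quarter_lt_pdf_quarter
  rw [cdf_zero] at hcdf
  rw [tailGap]
  norm_num
  linarith

lemma tailGap_0_6121_neg : tailGap 0.6121 < 0 := by
  have hpdf := div_le_div_of_nonneg_right pdf_0_6121_le (by norm_num : (0 : ℝ) ≤ 2 * 0.6121)
  have hcdf := cdf_0_6121_le
  rw [tailGap]
  norm_num at hpdf ⊢
  linarith

/- The bracket has to be tight: `tφ(t)` has slope about `0.2` near `t₀ ≈ 0.61200`, while
`0.2025` exceeds `t₀φ(t₀) ≈ 0.202456` by only `4·10⁻⁵`. -/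
lemma exists_tailGap_eq_zero : ∃ t₀ ∈ Icc (1 / 4 : ℝ) 0.6121, tailGap t₀ = 0 :=
  intermediate_value_Icc' (by norm_num)
    (differentiableOn_tailGap.continuousOn.mono fun _ ht => lt_of_lt_of_le (by norm_num) ht.1)
    ⟨tailGap_0_6121_neg.le, tailGap_quarter_pos.le⟩

theorem score_le (t : ℝ) : score t ≤ 0.2025 := by
  obtain ⟨t₀, ⟨ht₀, ht₀'⟩, hz⟩ := exists_tailGap_eq_zero
  have ht₀pos : 0 < t₀ := by linarith
  calc score t ≤ score t₀ := score_le_of_tailGap_eq_zero ht₀pos (by linarith) hz t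
    _ = t₀ * pdf t₀ := score_eq_of_tailGap_eq_zero ht₀pos.ne' hz
    _ ≤ 0.6121 * pdf 0.6121 :=
        monotoneOn_mul_pdf ⟨by linarith, by linarith⟩ ⟨by norm_num, by norm_num⟩ ht₀'
    _ ≤ 0.6121 * 0.3308 := mul_le_mul_of_nonneg_left pdf_0_6121_le (by norm_num)
    _ ≤ 0.2025 := by norm_num

end StdNormal

end

/-- Lemma 2 (expectation bound): with `φ` the standard normal density and
`Φ` the standard normal cdf, for every `β ∈ ℝ`,
`−2β·φ(−β) − 2β²·(1 − Φ(−β)) ≤ 0.2025`. -/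
theorem stmt_12 (φ Φ : ℝ → ℝ)
    (hφ : ∀ x, φ x = Real.exp (-x ^ 2 / 2) / Real.sqrt (2 * Real.pi))
    (hΦ : ∀ z, Φ z = ∫ x in Set.Iic z, φ x) :
    ∀ β : ℝ, -2 * β * φ (-β) - 2 * β ^ 2 * (1 - Φ (-β)) ≤ 0.2025 := by
  have hpdf : φ = StdNormal.pdf := funext hφ
  have hcdf : Φ = StdNormal.cdf := funext fun z => by rw [hΦ, hpdf]; rfl
  subst hpdf hcdf
  intro β
  calc _ = StdNormal.score (-β) := by rw [StdNormal.score]; ring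
    _ ≤ 0.2025 := StdNormal.score_le (-β)
end

section
/- Let n ≥ 1, and for each i ∈ {1,…,n} let p_i ∈ (0,1) and y_i ∈ {0,1}, and define Q(Δ) = ∑_{i=1}^n ( log(Δ·p_i + 1 − p_i) − y_i·log Δ ) for Δ > 0. Suppose Δ₀ > 0 satisfies the stationarity equation ∑_{i=1}^n Δ₀·p_i/(Δ₀·p_i + 1 − p_i) = ∑_{i=1}^n y_i. Then Q is strictly increasing on the interval [Δ₀, ∞). -/
open Finset Real

/- `Q'(Δ) = (1/Δ) ∑ᵢ (p̃ᵢ(Δ) − yᵢ)` with `p̃ᵢ(Δ) = Δpᵢ/(Δpᵢ + 1 − pᵢ)`. Each `p̃ᵢ` is strictly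
increasing, and the stationarity equation says the sum vanishes at `Δ₀`, so `Q' > 0` on `(Δ₀, ∞)`. -/

noncomputable def tiltedProb (p Δ : ℝ) : ℝ := Δ * p / (Δ * p + 1 - p)

lemma tiltedProb_denom_pos {p Δ : ℝ} (hp₀ : 0 ≤ p) (hp₁ : p < 1) (hΔ : 0 ≤ Δ) :
    0 < Δ * p + 1 - p := by
  nlinarith [mul_nonneg hΔ hp₀]

lemma tiltedProb_strictMonoOn {p : ℝ} (hp : p ∈ Set.Ioo 0 1) :
    StrictMonoOn (tiltedProb p) (Set.Ici 0) := by
  intro a ha b hb hab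
  rw [tiltedProb, tiltedProb, div_lt_div_iff₀ (tiltedProb_denom_pos hp.1.le hp.2 ha)
    (tiltedProb_denom_pos hp.1.le hp.2 hb)]
  nlinarith [mul_pos (mul_pos hp.1 (sub_pos.2 hp.2)) (sub_pos.2 hab)]

lemma hasDerivAt_log_affine_sub_mul_log {p : ℝ} (hp₀ : 0 ≤ p) (hp₁ : p < 1) (y : ℝ) {x : ℝ}
    (hx : 0 < x) :
    HasDerivAt (fun Δ => log (Δ * p + 1 - p) - y * log Δ) ((tiltedProb p x - y) / x) x := by
  have hden := tiltedProb_denom_pos hp₀ hp₁ hx.le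
  have hlin : HasDerivAt (fun Δ => Δ * p + 1 - p) p x := by
    simpa using (((hasDerivAt_id x).mul_const p).add_const 1).sub_const p
  refine ((hlin.log hden.ne').sub ((hasDerivAt_log hx.ne').const_mul y)).congr_deriv ?_
  rw [tiltedProb]
  field_simp

lemma hasDerivAt_sum_log_affine_sub_mul_log {ι : Type*} [Fintype ι] {p : ι → ℝ}
    (hp : ∀ i, p i ∈ Set.Ico 0 1) (y : ι → ℝ) {x : ℝ} (hx : 0 < x) :
    HasDerivAt (fun Δ => ∑ i, (log (Δ * p i + 1 - p i) - y i * log Δ))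
      ((∑ i, (tiltedProb (p i) x - y i)) / x) x := by
  rw [sum_div]
  exact HasDerivAt.fun_sum fun i _ =>
    hasDerivAt_log_affine_sub_mul_log (hp i).1 (hp i).2 (y i) hx

lemma sum_tiltedProb_sub_pos {ι : Type*} [Fintype ι] [Nonempty ι] {p y : ι → ℝ}
    (hp : ∀ i, p i ∈ Set.Ioo 0 1) {Δ₀ Δ : ℝ} (hΔ₀ : 0 ≤ Δ₀) (hΔ : Δ₀ < Δ)
    (hstat : ∑ i, tiltedProb (p i) Δ₀ = ∑ i, y i) :
    0 < ∑ i, (tiltedProb (p i) Δ - y i) := by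
  rw [sum_sub_distrib, ← hstat, sub_pos]
  exact sum_lt_sum_of_nonempty univ_nonempty fun i _ =>
    tiltedProb_strictMonoOn (hp i) hΔ₀ (hΔ₀.trans hΔ.le) hΔ

theorem stmt_16_general (n : ℕ) (hn : 1 ≤ n) (p y : Fin n → ℝ)
    (hp : ∀ i, p i ∈ Set.Ioo (0 : ℝ) 1)
    (Q : ℝ → ℝ)
    (hQ : ∀ Δ, Q Δ = ∑ i, (Real.log (Δ * p i + 1 - p i)
          - y i * Real.log Δ))
    (Δ₀ : ℝ) (hΔ₀ : 0 < Δ₀)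
    (hstat : ∑ i, Δ₀ * p i / (Δ₀ * p i + 1 - p i) = ∑ i, y i) :
    StrictMonoOn Q (Set.Ici Δ₀) := by
  obtain rfl : Q = _ := funext hQ
  have : Nonempty (Fin n) := ⟨⟨0, hn⟩⟩
  have hderiv : ∀ x ∈ Set.Ici Δ₀, HasDerivAt _ ((∑ i, (tiltedProb (p i) x - y i)) / x) x :=
    fun x hx => hasDerivAt_sum_log_affine_sub_mul_log (fun i => Set.Ioo_subset_Ico_self (hp i)) y
      (hΔ₀.trans_le hx)
  refine strictMonoOn_of_hasDerivWithinAt_pos (convex_Ici Δ₀)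
    (fun x hx => (hderiv x hx).continuousAt.continuousWithinAt)
    (fun x hx => (hderiv x (interior_subset hx)).hasDerivWithinAt) fun x hx => ?_
  rw [interior_Ici] at hx
  exact div_pos (sum_tiltedProb_sub_pos hp hΔ₀.le hx hstat) (hΔ₀.trans hx)

/-- Theorem 4 (monotonicity of `Q`): if `Δ₀ > 0` satisfies the
stationarity equation `∑ᵢ Δ₀·pᵢ/(Δ₀·pᵢ + 1 − pᵢ) = ∑ᵢ yᵢ`, then
`Q(Δ) = ∑ᵢ (log(Δ·pᵢ + 1 − pᵢ) − yᵢ·log Δ)` is strictly increasing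
on `[Δ₀, ∞)`. -/
theorem stmt_16 (n : ℕ) (hn : 1 ≤ n) (p y : Fin n → ℝ)
    (hp : ∀ i, p i ∈ Set.Ioo (0 : ℝ) 1) (hy : ∀ i, y i = 0 ∨ y i = 1)
    (Q : ℝ → ℝ)
    (hQ : ∀ Δ, Q Δ = ∑ i, (Real.log (Δ * p i + 1 - p i)
          - y i * Real.log Δ))
    (Δ₀ : ℝ) (hΔ₀ : 0 < Δ₀)
    (hstat : ∑ i, Δ₀ * p i / (Δ₀ * p i + 1 - p i) = ∑ i, y i) :
    StrictMonoOn Q (Set.Ici Δ₀) :=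
  stmt_16_general n hn p y hp Q hQ Δ₀ hΔ₀ hstat
end

section
/- Let n ≥ 1, and for each i ∈ {1,…,n} let p_i ∈ (0,1) and y_i ∈ {0,1}, with ∑_{i=1}^n y_i < n. Define Q(Δ) = ∑_{i=1}^n ( log(Δ·p_i + 1 − p_i) − y_i·log Δ ) for Δ > 0, and suppose Δ₀ > 0 satisfies ∑_{i=1}^n Δ₀·p_i/(Δ₀·p_i + 1 − p_i) = ∑_{i=1}^n y_i. Then for every h > 0 there exists a unique Δ_thresh > Δ₀ such that Q(Δ_thresh) − Q(Δ₀) = h; moreover Q(Δ) − Q(Δ₀) > h for every Δ > Δ_thresh. -/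
open Finset Real Set Filter

/-!
`Q` has derivative `(∑ᵢ Δpᵢ/(Δpᵢ + 1 - pᵢ) - ∑ᵢ yᵢ) / Δ`; each summand `Δpᵢ/(Δpᵢ + 1 - pᵢ)` is
strictly increasing in `Δ`, and the stationarity condition says the bracket vanishes at `Δ₀`,
so `Q` is strictly increasing on `[Δ₀, ∞)`. Since `log (Δpᵢ + 1 - pᵢ) ≥ log Δ + log pᵢ`,
`Q Δ` grows at least like `(n - ∑ᵢ yᵢ) log Δ`, hence tends to infinity, and the intermediate
value theorem produces `Δ_thresh`.
-/

theorem StrictMonoOn.exists_unique_sub_eq_of_tendsto_atTop {f : ℝ → ℝ} {a h : ℝ}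
    (hcont : ContinuousOn f (Ici a)) (hmono : StrictMonoOn f (Ici a))
    (htop : Tendsto f atTop atTop) (hh : 0 < h) :
    ∃ t, a < t ∧ f t - f a = h ∧ (∀ t', a < t' → f t' - f a = h → t' = t) ∧
      ∀ s, t < s → h < f s - f a := by
  obtain ⟨M, hfM, haM⟩ :=
    ((htop.eventually_ge_atTop (f a + h)).and (eventually_ge_atTop a)).exists
  obtain ⟨t, ⟨hat, -⟩, hft⟩ :=
    intermediate_value_Icc haM (hcont.mono Icc_subset_Ici_self) ⟨by linarith, hfM⟩
  have hat' : a < t := hat.lt_of_ne (by rintro rfl; linarith)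
  refine ⟨t, hat', by linarith, fun t' ht' hft' => hmono.injOn ht'.le hat (by linarith),
    fun s hts => ?_⟩
  have := hmono hat (hat.trans hts.le) hts
  linarith

namespace BiasScan

/-- The probability whose odds are `Δ` times the odds of `p`. -/
noncomputable def scaleOdds (Δ p : ℝ) : ℝ := Δ * p / (Δ * p + 1 - p)

lemma mul_add_one_sub_pos {Δ p : ℝ} (hΔ : 0 < Δ) (hp : p ∈ Ioo (0 : ℝ) 1) :
    0 < Δ * p + 1 - p := by
  have := mul_pos hΔ hp.1
  linarith [hp.2]

lemma scaleOdds_lt_scaleOdds {a b p : ℝ} (ha : 0 < a) (hab : a < b) (hp : p ∈ Ioo (0 : ℝ) 1) :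
    scaleOdds a p < scaleOdds b p := by
  unfold scaleOdds
  rw [div_lt_div_iff₀ (mul_add_one_sub_pos ha hp) (mul_add_one_sub_pos (ha.trans hab) hp)]
  nlinarith [mul_pos (mul_pos (sub_pos.mpr hab) hp.1) (sub_pos.mpr hp.2)]

variable {ι : Type*} [Fintype ι] {p : ι → ℝ}

noncomputable def biasScore (p y : ι → ℝ) (Δ : ℝ) : ℝ :=
  ∑ i, (log (Δ * p i + 1 - p i) - y i * log Δ)

lemma hasDerivAt_biasScore (y : ι → ℝ) (hp : ∀ i, p i ∈ Ioo (0 : ℝ) 1) {Δ : ℝ} (hΔ : 0 < Δ) :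
    HasDerivAt (biasScore p y) ((∑ i, scaleOdds Δ (p i) - ∑ i, y i) / Δ) Δ := by
  have hsum : HasDerivAt (biasScore p y) (∑ i, (p i / (Δ * p i + 1 - p i) - y i / Δ)) Δ := by
    refine HasDerivAt.fun_sum fun i _ => ?_
    have hlin : HasDerivAt (fun Δ : ℝ => Δ * p i + 1 - p i) (p i) Δ := by
      simpa using (((hasDerivAt_id Δ).mul_const (p i)).add_const 1).sub_const (p i)
    have hlog := (hlin.log (mul_add_one_sub_pos hΔ (hp i)).ne').fun_sub
      ((hasDerivAt_log hΔ.ne').const_mul (y i))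
    simpa [div_eq_mul_inv] using hlog
  convert hsum using 1
  rw [sub_div, Finset.sum_div, Finset.sum_div, ← Finset.sum_sub_distrib]
  refine Finset.sum_congr rfl fun i _ => ?_
  have := (mul_add_one_sub_pos hΔ (hp i)).ne'
  unfold scaleOdds
  field_simp

lemma continuousOn_biasScore (y : ι → ℝ) (hp : ∀ i, p i ∈ Ioo (0 : ℝ) 1) :
    ContinuousOn (biasScore p y) (Ioi 0) :=
  fun _ hΔ => (hasDerivAt_biasScore y hp hΔ).continuousAt.continuousWithinAt

lemma strictMonoOn_biasScore [Nonempty ι] (y : ι → ℝ) (hp : ∀ i, p i ∈ Ioo (0 : ℝ) 1)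
    {Δ₀ : ℝ} (hΔ₀ : 0 < Δ₀) (hstat : ∑ i, scaleOdds Δ₀ (p i) = ∑ i, y i) :
    StrictMonoOn (biasScore p y) (Ici Δ₀) := by
  refine strictMonoOn_of_deriv_pos (convex_Ici Δ₀)
    ((continuousOn_biasScore y hp).mono (Ici_subset_Ioi.mpr hΔ₀)) fun x hx => ?_
  rw [interior_Ici] at hx
  have hx0 : 0 < x := hΔ₀.trans hx
  rw [(hasDerivAt_biasScore y hp hx0).deriv, ← hstat]
  refine div_pos (sub_pos.mpr ?_) hx0
  exact Finset.sum_lt_sum_of_nonempty univ_nonempty fun i _ => scaleOdds_lt_scaleOdds hΔ₀ hx (hp i)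

lemma log_add_sum_log_le_biasScore (y : ι → ℝ) (hp : ∀ i, p i ∈ Ioo (0 : ℝ) 1) {Δ : ℝ}
    (hΔ : 0 < Δ) :
    (Fintype.card ι - ∑ i, y i) * log Δ + ∑ i, log (p i) ≤ biasScore p y Δ := by
  have hterm (i : ι) : log Δ + log (p i) ≤ log (Δ * p i + 1 - p i) := by
    rw [← log_mul hΔ.ne' (hp i).1.ne']
    exact log_le_log (mul_pos hΔ (hp i).1) (by linarith [(hp i).2])
  calc (Fintype.card ι - ∑ i, y i) * log Δ + ∑ i, log (p i)
      = ∑ i, (log Δ + log (p i) - y i * log Δ) := by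
        simp only [Finset.sum_sub_distrib, Finset.sum_add_distrib, ← Finset.sum_mul,
          Finset.sum_const, Finset.card_univ, nsmul_eq_mul]
        ring
    _ ≤ biasScore p y Δ := Finset.sum_le_sum fun i _ => by linarith [hterm i]

lemma tendsto_biasScore_atTop (y : ι → ℝ) (hp : ∀ i, p i ∈ Ioo (0 : ℝ) 1)
    (hy : ∑ i, y i < Fintype.card ι) :
    Tendsto (biasScore p y) atTop atTop := by
  have hlower : Tendsto (fun Δ => (Fintype.card ι - ∑ i, y i) * log Δ + ∑ i, log (p i))
      atTop atTop :=
    tendsto_atTop_add_const_right _ _ (tendsto_log_atTop.const_mul_atTop (sub_pos.mpr hy))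
  exact tendsto_atTop_mono' _
    ((eventually_gt_atTop 0).mono fun Δ hΔ => log_add_sum_log_le_biasScore y hp hΔ) hlower

end BiasScan

open BiasScan in
theorem stmt_18_general (n : ℕ) (p y : Fin n → ℝ)
    (hp : ∀ i, p i ∈ Set.Ioo (0 : ℝ) 1)
    (hyn : ∑ i, y i < n)
    (Q : ℝ → ℝ)
    (hQ : ∀ Δ, Q Δ = ∑ i, (Real.log (Δ * p i + 1 - p i)
          - y i * Real.log Δ))
    (Δ₀ : ℝ) (hΔ₀ : 0 < Δ₀)
    (hstat : ∑ i, Δ₀ * p i / (Δ₀ * p i + 1 - p i) = ∑ i, y i)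
    (h : ℝ) (hh : 0 < h) :
    ∃ Δthresh : ℝ, Δ₀ < Δthresh ∧ Q Δthresh - Q Δ₀ = h
      ∧ (∀ Δ' : ℝ, Δ₀ < Δ' → Q Δ' - Q Δ₀ = h → Δ' = Δthresh)
      ∧ ∀ Δ : ℝ, Δthresh < Δ → h < Q Δ - Q Δ₀ := by
  obtain rfl : Q = biasScore p y := funext hQ
  have hcard : ∑ i, y i < Fintype.card (Fin n) := by simpa using hyn
  have : Nonempty (Fin n) :=
    Fin.pos_iff_nonempty.mp (Nat.pos_of_ne_zero (by rintro rfl; simp at hyn))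
  exact (strictMonoOn_biasScore y hp hΔ₀ hstat).exists_unique_sub_eq_of_tendsto_atTop
    ((continuousOn_biasScore y hp).mono (Ici_subset_Ioi.mpr hΔ₀))
    (tendsto_biasScore_atTop y hp hcard) hh

/-- Deterministic core of Theorem 4: under the stationarity condition at
`Δ₀`, for every threshold `h > 0` there exists a unique `Δ_thresh > Δ₀`
with `Q(Δ_thresh) − Q(Δ₀) = h`; moreover `Q(Δ) − Q(Δ₀) > h` for every
`Δ > Δ_thresh`. -/
theorem stmt_18 (n : ℕ) (hn : 1 ≤ n) (p y : Fin n → ℝ)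
    (hp : ∀ i, p i ∈ Set.Ioo (0 : ℝ) 1) (hy : ∀ i, y i = 0 ∨ y i = 1)
    (hyn : ∑ i, y i < n)
    (Q : ℝ → ℝ)
    (hQ : ∀ Δ, Q Δ = ∑ i, (Real.log (Δ * p i + 1 - p i)
          - y i * Real.log Δ))
    (Δ₀ : ℝ) (hΔ₀ : 0 < Δ₀)
    (hstat : ∑ i, Δ₀ * p i / (Δ₀ * p i + 1 - p i) = ∑ i, y i)
    (h : ℝ) (hh : 0 < h) :
    ∃ Δthresh : ℝ, Δ₀ < Δthresh ∧ Q Δthresh - Q Δ₀ = h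
      ∧ (∀ Δ' : ℝ, Δ₀ < Δ' → Q Δ' - Q Δ₀ = h → Δ' = Δthresh)
      ∧ ∀ Δ : ℝ, Δthresh < Δ → h < Q Δ - Q Δ₀ :=
  stmt_18_general n p y hp hyn Q hQ Δ₀ hΔ₀ hstat h hh
end
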